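/- Let L be the 2k × 2k Latin square with L(i,j) = ((j−i) mod k)+1 for i,j ≤ k, ((i−j) mod k)+1 for i,j > k, ((j−i) mod k)+1+k for i ≤ k < j, and ((i−j) mod k)+1+k for j ≤ k < i. Then for any two cells (i,j) and (x,y) lying in the same row or same column but in opposite quadrants (one with column index ≤ k and the other > k for the row case), the four cells (i,j), (i,y), (x,j), (x,y) where x is chosen so L(x,j) = L(i,y) form a 2×2 Latin subsquare: L(i,j) = L(x,y) and L(i,y) = L(x,j). -/

import Mathlib

/-- The `2k × 2k` block-circulant square. -/
def chLatin (k : ℕ) : ℕ → ℕ → ℕ := fun i j =>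
  if i ≤ k then (k + j - i) % k + 1 + (if j ≤ k then 0 else k)
  else (k + i - j) % k + 1 + (if j ≤ k then k else 0)

/-!
For cells in range, `chLatin k i j = r + 1 + (0 or k)` where the residue `r ∈ ZMod k` is
`j - i` when `i ≤ k` and `i - j` otherwise, and the offset `k` marks the off-diagonal blocks;
both pieces can be read back from the symbol. If `i` and `x` lie in opposite halves, the residue
part of `L x j = L i y` says `x - j = y - i`, which is also the residue part of
`L i j = L x y`, and the block offsets agree by parity. In the row case, the same parity count
applied to `L x j = L i y` moves the opposite-halves condition from `j, y` to `i, x`.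
-/

theorem ZMod.val_natCast_sub_of_le_add {k a b : ℕ} (h : b ≤ k + a) :
    ((a : ZMod k) - b).val = (k + a - b) % k := by
  rw [← ZMod.val_natCast, Nat.cast_sub h, Nat.cast_add, ZMod.natCast_self, zero_add]

theorem ZMod.val_add_one_add_ite_inj {k : ℕ} [NeZero k] {p q : Prop} [Decidable p]
    [Decidable q] {a b : ZMod k}
    (h : a.val + 1 + (if p then 0 else k) = b.val + 1 + (if q then 0 else k)) :
    (p ↔ q) ∧ a = b := by
  have ha := a.val_lt
  have hb := b.val_lt
  split_ifs at h with hp hq hq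
  · exact ⟨iff_of_true hp hq, ZMod.val_injective k (by omega)⟩
  · omega
  · omega
  · exact ⟨iff_of_false hp hq, ZMod.val_injective k (by omega)⟩

def chResidue (k i j : ℕ) : ZMod k :=
  if i ≤ k then (j : ZMod k) - i else (i : ZMod k) - j

section

variable {k i j x y : ℕ}

theorem chLatin_eq (hi : i ≤ 2 * k) (hj : j ≤ 2 * k) :
    chLatin k i j = (chResidue k i j).val + 1 + if (i ≤ k ↔ j ≤ k) then 0 else k := by
  unfold chLatin chResidue
  split_ifs <;> first
    | tauto
    | rw [ZMod.val_natCast_sub_of_le_add (by omega)]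

theorem chLatin_eq_chLatin [NeZero k] (hi : i ≤ 2 * k) (hj : j ≤ 2 * k) (hx : x ≤ 2 * k)
    (hy : y ≤ 2 * k) (h : chLatin k i j = chLatin k x y) :
    ((i ≤ k ↔ j ≤ k) ↔ (x ≤ k ↔ y ≤ k)) ∧ chResidue k i j = chResidue k x y := by
  rw [chLatin_eq hi hj, chLatin_eq hx hy] at h
  exact ZMod.val_add_one_add_ite_inj h

theorem chResidue_subsquare (hix : i ≤ k ↔ ¬x ≤ k) (h : chResidue k x j = chResidue k i y) :
    chResidue k i j = chResidue k x y := by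
  unfold chResidue at h ⊢
  by_cases hi : i ≤ k
  · simp only [hi, hix.1 hi, if_true, if_false] at h ⊢
    linear_combination -h
  · have hx : x ≤ k := by tauto
    simp only [hi, hx, if_true, if_false] at h ⊢
    linear_combination -h

theorem chLatin_subsquare [NeZero k] (hi : i ≤ 2 * k) (hj : j ≤ 2 * k) (hx : x ≤ 2 * k)
    (hy : y ≤ 2 * k) (hix : i ≤ k ↔ ¬x ≤ k) (h : chLatin k x j = chLatin k i y) :
    chLatin k i j = chLatin k x y := by
  obtain ⟨hblock, hres⟩ := chLatin_eq_chLatin hx hj hi hy h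
  have hblock' : (i ≤ k ↔ j ≤ k) ↔ (x ≤ k ↔ y ≤ k) := by tauto
  rw [chLatin_eq hi hj, chLatin_eq hx hy, chResidue_subsquare hix hres]
  simp only [hblock']

end

theorem stmt2_general (k : ℕ) :
    (∀ i ∈ Finset.Icc 1 (2 * k), ∀ j ∈ Finset.Icc 1 (2 * k),
      ∀ x ∈ Finset.Icc 1 (2 * k), ∀ y ∈ Finset.Icc 1 (2 * k),
      ((j ≤ k ∧ k < y) ∨ (y ≤ k ∧ k < j)) →
      chLatin k x j = chLatin k i y →
      chLatin k i j = chLatin k x y ∧ chLatin k i y = chLatin k x j) ∧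
    (∀ i ∈ Finset.Icc 1 (2 * k), ∀ j ∈ Finset.Icc 1 (2 * k),
      ∀ x ∈ Finset.Icc 1 (2 * k), ∀ y ∈ Finset.Icc 1 (2 * k),
      ((i ≤ k ∧ k < x) ∨ (x ≤ k ∧ k < i)) →
      chLatin k i y = chLatin k x j →
      chLatin k i j = chLatin k x y ∧ chLatin k i y = chLatin k x j) := by
  refine ⟨fun i hi j hj x hx y hy hjy h => ?_, fun i hi j hj x hx y hy hix h => ?_⟩ <;>
    simp only [Finset.mem_Icc] at hi hj hx hy <;>
    have : NeZero k := ⟨by omega⟩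
  · have hix : i ≤ k ↔ ¬x ≤ k := by
      have hblock := (chLatin_eq_chLatin hx.2 hj.2 hi.2 hy.2 h).1
      omega
    exact ⟨chLatin_subsquare hi.2 hj.2 hx.2 hy.2 hix h, h.symm⟩
  · exact ⟨chLatin_subsquare hi.2 hj.2 hx.2 hy.2 (by omega) h.symm, h⟩

/-- In the square `chLatin k`, any two cells of the same row (resp. column) lying in
opposite quadrants give rise to a `2 × 2` Latin subsquare: if `x` (resp. `y`) is chosen so
that `L x j = L i y`, then `L i j = L x y` and `L i y = L x j`. -/
theorem stmt2 (k : ℕ) (hk : 0 < k) :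
    (∀ i ∈ Finset.Icc 1 (2 * k), ∀ j ∈ Finset.Icc 1 (2 * k),
      ∀ x ∈ Finset.Icc 1 (2 * k), ∀ y ∈ Finset.Icc 1 (2 * k),
      ((j ≤ k ∧ k < y) ∨ (y ≤ k ∧ k < j)) →
      chLatin k x j = chLatin k i y →
      chLatin k i j = chLatin k x y ∧ chLatin k i y = chLatin k x j) ∧
    (∀ i ∈ Finset.Icc 1 (2 * k), ∀ j ∈ Finset.Icc 1 (2 * k),
      ∀ x ∈ Finset.Icc 1 (2 * k), ∀ y ∈ Finset.Icc 1 (2 * k),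
      ((i ≤ k ∧ k < x) ∨ (x ≤ k ∧ k < i)) →
      chLatin k i y = chLatin k x j →
      chLatin k i j = chLatin k x y ∧ chLatin k i y = chLatin k x j) :=
  stmt2_general k
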